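/- arXiv:1811.06881 — 6 statements merged into one kernel-verified Lean document; each statement's English description precedes it below -/
import Mathlib

section
/- Let R be a commutative Noetherian ring and x_1,...,x_d a regular R-sequence contained in the Jacobson radical of R. If x_1^{e_1}···x_d^{e_d} = x_1^{f_1}···x_d^{f_d} for non-negative integers e_i, f_i, then e_i = f_i for all i. -/
/-!
Work with a Noetherian module `M` and induct on `d`. In the inductive step the sequence lies in
the Jacobson radical, so it may be permuted; hence every `x i` with `i ≠ 0`, and so every product
of their powers, is a nonzerodivisor on `M / x 0 M`, which is nonzero. If `e 0 < f 0`, cancelling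
`x 0 ^ e 0` shows that such a product maps `M` into `x 0 M`, i.e. kills `M / x 0 M`; so
`e 0 = f 0`, and after cancelling `x 0 ^ e 0` the remaining products act equally on `M / x 0 M`.
-/

namespace RingTheory.Sequence

variable {R M : Type*} [CommRing R] [AddCommGroup M] [Module R M]

lemma IsWeaklyRegular.isSMulRegular_of_mem [IsNoetherian R M] {rs : List R}
    (hrs : IsWeaklyRegular M rs) (hjac : ∀ r ∈ rs, r ∈ (Module.annihilator R M).jacobson)
    {r : R} (hr : r ∈ rs) : IsSMulRegular M r := by
  classical
  exact ((isWeaklyRegular_cons_iff M _ _).mp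
    (hrs.of_perm_of_subset_jacobson_annihilator (List.perm_cons_erase hr) hjac)).1

lemma isSMulRegular_prod_pow {ι : Type*} (s : Finset ι) {x : ι → R} (e : ι → ℕ)
    (hx : ∀ i ∈ s, IsSMulRegular M (x i)) : IsSMulRegular M (∏ i ∈ s, x i ^ e i) :=
  Finset.prod_induction _ _ (fun _ _ => IsSMulRegular.mul) (IsSMulRegular.one M)
    fun i hi => (hx i hi).pow (e i)

lemma annihilator_le_annihilator_quotSMulTop (r : R) :
    Module.annihilator R M ≤ Module.annihilator R (QuotSMulTop r M) :=
  LinearMap.annihilator_le_of_surjective _ (Submodule.mkQ_surjective _)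

lemma le_of_pow_mul_smul_eq {r a b : R} [Nontrivial (QuotSMulTop r M)] (hr : IsSMulRegular M r)
    (ha : IsSMulRegular (QuotSMulTop r M) a) {p q : ℕ}
    (h : ∀ m : M, (r ^ p * a) • m = (r ^ q * b) • m) : q ≤ p := by
  by_contra! hpq
  obtain ⟨k, rfl⟩ := Nat.exists_eq_add_of_lt hpq
  have hcancel (m : M) : a • m = r • (r ^ k * b) • m := hr.pow p <| by
    simp only [← mul_smul, h m]
    ring_nf
  have hkill (y : QuotSMulTop r M) : a • y = a • 0 := by
    obtain ⟨m, rfl⟩ := Submodule.mkQ_surjective _ y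
    rw [smul_zero, ← LinearMap.map_smul, Submodule.mkQ_apply, Submodule.Quotient.mk_eq_zero,
      hcancel m]
    exact Submodule.smul_mem_pointwise_smul _ r ⊤ trivial
  exact not_subsingleton _ ⟨fun y z => (ha (hkill y)).trans (ha (hkill z)).symm⟩

theorem IsRegular.eq_of_prod_pow_smul_eq [IsNoetherian R M] {d : ℕ} {x : Fin d → R}
    (hreg : IsRegular M (List.ofFn x)) (hjac : ∀ i, x i ∈ (Module.annihilator R M).jacobson)
    {e f : Fin d → ℕ} (h : ∀ m : M, (∏ i, x i ^ e i) • m = (∏ i, x i ^ f i) • m) : e = f := by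
  induction d generalizing M with
  | zero => exact Subsingleton.elim e f
  | succ d ih =>
    set Q := QuotSMulTop (x 0) M
    rw [List.ofFn_succ, isRegular_cons_iff] at hreg
    obtain ⟨hx₀, hregQ⟩ := hreg
    have hQ := hregQ.nontrivial
    have hjacQ (i : Fin d) : x i.succ ∈ (Module.annihilator R Q).jacobson :=
      Ideal.jacobson_mono (annihilator_le_annihilator_quotSMulTop _) (hjac i.succ)
    have hprod_regular (g : Fin d → ℕ) : IsSMulRegular Q (∏ i, x i.succ ^ g i) :=
      isSMulRegular_prod_pow _ _ fun i _ =>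
        hregQ.toIsWeaklyRegular.isSMulRegular_of_mem (by simpa using hjacQ)
          (List.mem_ofFn.mpr ⟨i, rfl⟩)
    simp only [Fin.prod_univ_succ] at h
    have h₀ : e 0 = f 0 := le_antisymm
      (le_of_pow_mul_smul_eq hx₀ (hprod_regular _) fun m => (h m).symm)
      (le_of_pow_mul_smul_eq hx₀ (hprod_regular _) h)
    have htail : (fun i : Fin d => e i.succ) = fun i => f i.succ := by
      refine ih hregQ hjacQ fun y => ?_
      obtain ⟨m, rfl⟩ := Submodule.mkQ_surjective _ y
      rw [← LinearMap.map_smul, ← LinearMap.map_smul]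
      congr 1
      refine (hx₀.pow (e 0)) ?_
      simp only [← mul_smul, ← h₀, h m]
    funext i
    exact Fin.cases h₀ (congrFun htail) i

end RingTheory.Sequence

theorem stmt_0 {R : Type*} [CommRing R] [IsNoetherianRing R] {d : ℕ} (x : Fin d → R)
    (hreg : RingTheory.Sequence.IsRegular R (List.ofFn x))
    (hjac : ∀ i, x i ∈ Ideal.jacobson (⊥ : Ideal R))
    (e f : Fin d → ℕ) (h : ∏ i, x i ^ e i = ∏ i, x i ^ f i) : e = f :=
  hreg.eq_of_prod_pow_smul_eq (fun i => Ideal.jacobson_mono bot_le (hjac i))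
    fun m => by rw [h]
end

section
/- Let R be a commutative Noetherian ring, x_1,...,x_d a regular R-sequence in the Jacobson radical of R, and u, v two monomials with respect to x_1,...,x_d. Then the intersection of the principal ideals uR and vR equals the principal ideal generated by lcm(u,v). -/
open RingTheory.Sequence Ideal Pointwise

private lemma aux_one_prime {R : Type*} [CommRing R] {I : Ideal R} :
    ∀ r : R, (1 : R) * r ∈ I → r ∈ I := fun r hr => by simpa using hr

private lemma aux_mul_prime {R : Type*} [CommRing R] {a b z : R}
    (ha : IsSMulRegular R a)
    (hza : ∀ r : R, z * r ∈ Ideal.span {a} → r ∈ Ideal.span {a})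
    (hzb : ∀ r : R, z * r ∈ Ideal.span {b} → r ∈ Ideal.span {b}) :
    ∀ r : R, z * r ∈ Ideal.span {a * b} → r ∈ Ideal.span {a * b} := by
  intro r hr
  rw [Ideal.mem_span_singleton] at hr ⊢
  obtain ⟨s, hs⟩ := hr
  have h1 : r ∈ Ideal.span {a} :=
    hza r (Ideal.mem_span_singleton.mpr ⟨b * s, by rw [hs]; ring⟩)
  obtain ⟨r', rfl⟩ := Ideal.mem_span_singleton.mp h1
  have hcan : z * r' = b * s := by
    apply ha
    simp only [smul_eq_mul]
    calc a * (z * r') = z * (a * r') := by ring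
    _ = a * b * s := hs
    _ = a * (b * s) := by ring
  obtain ⟨c, hc⟩ := Ideal.mem_span_singleton.mp (hzb r' (Ideal.mem_span_singleton.mpr ⟨s, hcan⟩))
  exact ⟨c, by rw [hc]; ring⟩

private lemma aux_pow_prime {R : Type*} [CommRing R] {z : R} {I : Ideal R}
    (hz : ∀ r : R, z * r ∈ I → r ∈ I) (n : ℕ) :
    ∀ r : R, z ^ n * r ∈ I → r ∈ I := by
  induction n with
  | zero => simpa using fun r hr => hr
  | succ n ih =>
    intro r hr
    apply ih
    apply hz
    rw [← mul_assoc, ← pow_succ']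
    exact hr

theorem stmt_1 {R : Type*} [CommRing R] [IsNoetherianRing R] {d : ℕ} (x : Fin d → R)
    (hreg : RingTheory.Sequence.IsRegular R (List.ofFn x))
    (hjac : ∀ i, x i ∈ Ideal.jacobson (⊥ : Ideal R))
    (e t : Fin d → ℕ) :
    Ideal.span {∏ i, x i ^ e i} ⊓ Ideal.span {∏ i, x i ^ t i} =
      Ideal.span {∏ i, x i ^ max (e i) (t i)} := by
  classical
  have hw := hreg.toIsWeaklyRegular
  have h3 : ∀ r ∈ List.ofFn x, r ∈ (Module.annihilator R R).jacobson := by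
    intro r hr
    rw [List.mem_ofFn] at hr
    obtain ⟨i, rfl⟩ := hr
    exact Ideal.jacobson_mono bot_le (hjac i)
  have hperm : ∀ l : List (Fin d), List.Perm (List.finRange d) l →
      IsWeaklyRegular R (List.map x l) := fun l hl =>
    hw.of_perm_of_subset_jacobson_annihilator
      (by rw [List.ofFn_eq_map]; exact hl.map x) h3
  -- each x i is regular
  have F0 : ∀ i, IsSMulRegular R (x i) := by
    intro i
    have h := hperm (i :: (List.finRange d).erase i)
      (List.perm_cons_erase (List.mem_finRange i))
    rw [List.map_cons, isWeaklyRegular_cons_iff] at h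
    exact h.1
  -- x i is a nonzerodivisor mod (x j) for i ≠ j
  have F1 : ∀ i j : Fin d, i ≠ j →
      ∀ r : R, x i * r ∈ Ideal.span {x j} → r ∈ Ideal.span {x j} := by
    intro i j hij r hr
    have hmem : i ∈ (List.finRange d).erase j :=
      (List.mem_erase_of_ne hij).mpr (List.mem_finRange i)
    have hp : List.Perm (List.finRange d) (j :: i :: ((List.finRange d).erase j).erase i) :=
      (List.perm_cons_erase (List.mem_finRange j)).trans
        (List.Perm.cons j (List.perm_cons_erase hmem))
    have hwr := hperm _ hp
    rw [List.map_cons, List.map_cons, isWeaklyRegular_cons_iff] at hwr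
    have h2 := ((isWeaklyRegular_cons_iff _ _ _).mp hwr.2).1
    -- h2 : IsSMulRegular (QuotSMulTop (x j) R) (x i)
    have hJ : (x j • ⊤ : Submodule R R) = (Ideal.span {x j} : Ideal R) := by
      rw [← Submodule.ideal_span_singleton_smul, Ideal.smul_eq_mul, Ideal.mul_top]
    have hq : (Submodule.Quotient.mk r : QuotSMulTop (x j) R) = 0 := by
      apply h2
      show x i • (Submodule.Quotient.mk r : QuotSMulTop (x j) R) = x i • 0
      rw [smul_zero, ← Submodule.Quotient.mk_smul, Submodule.Quotient.mk_eq_zero]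
      show x i • r ∈ (x j • ⊤ : Submodule R R)
      rw [hJ]; exact hr
    rw [Submodule.Quotient.mk_eq_zero, hJ] at hq
    exact hq
  -- x i is a nonzerodivisor mod (x j ^ m)
  have F2 : ∀ i j : Fin d, i ≠ j → ∀ m : ℕ,
      ∀ r : R, x i * r ∈ Ideal.span {x j ^ m} → r ∈ Ideal.span {x j ^ m} := by
    intro i j hij m
    induction m with
    | zero => intro r _; simp [Ideal.span_singleton_one]
    | succ n ih =>
      have : x j ^ (n + 1) = x j * x j ^ n := by rw [pow_succ']
      rw [this]
      exact aux_mul_prime (F0 j) (F1 i j hij) ih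
  -- x i is a nonzerodivisor mod a monomial not involving x i
  have F4s : ∀ (i : Fin d) (c : Fin d → ℕ) (s : Finset (Fin d)), i ∉ s →
      ∀ r : R, x i * r ∈ Ideal.span {∏ j ∈ s, x j ^ c j} →
        r ∈ Ideal.span {∏ j ∈ s, x j ^ c j} := by
    intro i c s
    induction s using Finset.induction_on with
    | empty => intro _ r; simp [Ideal.span_singleton_one]
    | @insert a s ha ih =>
      intro hia
      rw [Finset.prod_insert ha]
      exact aux_mul_prime ((F0 a).pow (c a))
        (F2 i a (fun h => hia (h ▸ Finset.mem_insert_self a s)) (c a))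
        (ih fun h => hia (Finset.mem_insert_of_mem h))
  have F4 : ∀ (i : Fin d) (c : Fin d → ℕ), c i = 0 →
      ∀ r : R, x i * r ∈ Ideal.span {∏ j, x j ^ c j} →
        r ∈ Ideal.span {∏ j, x j ^ c j} := by
    intro i c hci
    have : (∏ j ∈ Finset.univ.erase i, x j ^ c j) = ∏ j, x j ^ c j :=
      Finset.prod_erase _ (by rw [hci, pow_zero])
    rw [← this]
    exact F4s i c _ (Finset.notMem_erase i _)
  -- a monomial with disjoint support is a nonzerodivisor mod a monomial
  have F5 : ∀ (b c : Fin d → ℕ), (∀ j, b j = 0 ∨ c j = 0) →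
      ∀ r : R, (∏ j, x j ^ b j) * r ∈ Ideal.span {∏ j, x j ^ c j} →
        r ∈ Ideal.span {∏ j, x j ^ c j} := by
    intro b c hbc
    have key : ∀ s : Finset (Fin d),
        ∀ r : R, (∏ j ∈ s, x j ^ b j) * r ∈ Ideal.span {∏ j, x j ^ c j} →
          r ∈ Ideal.span {∏ j, x j ^ c j} := by
      intro s
      induction s using Finset.induction_on with
      | empty => intro r; simpa using fun h => h
      | @insert a s ha ih =>
        intro r hr
        rw [Finset.prod_insert ha, mul_assoc] at hr
        rcases hbc a with h | h
        · rw [h, pow_zero, one_mul] at hr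
          exact ih r hr
        · exact ih r (aux_pow_prime (F4 a c h) (b a) _ hr)
    exact key Finset.univ
  -- regularity of monomials
  have hgreg : ∀ c : Fin d → ℕ, IsSMulRegular R (∏ i, x i ^ c i) := by
    intro c
    exact Finset.prod_induction _ (IsSMulRegular R)
      (fun _ _ ha hb => ha.mul hb) (IsSMulRegular.one R)
      (fun i _ => (F0 i).pow (c i))
  set m : Fin d → ℕ := fun i => min (e i) (t i) with hm
  have hu : (∏ i, x i ^ e i) = (∏ i, x i ^ m i) * ∏ i, x i ^ (e i - m i) := by
    rw [← Finset.prod_mul_distrib]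
    exact Finset.prod_congr rfl fun i _ => by rw [← pow_add]; congr 1; simp only [hm]; omega
  have hv : (∏ i, x i ^ t i) = (∏ i, x i ^ m i) * ∏ i, x i ^ (t i - m i) := by
    rw [← Finset.prod_mul_distrib]
    exact Finset.prod_congr rfl fun i _ => by rw [← pow_add]; congr 1; simp only [hm]; omega
  have hl1 : (∏ i, x i ^ max (e i) (t i)) = (∏ i, x i ^ e i) * ∏ i, x i ^ (t i - m i) := by
    rw [← Finset.prod_mul_distrib]
    exact Finset.prod_congr rfl fun i _ => by rw [← pow_add]; congr 1; simp only [hm]; omega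
  have hl2 : (∏ i, x i ^ max (e i) (t i)) = (∏ i, x i ^ t i) * ∏ i, x i ^ (e i - m i) := by
    rw [← Finset.prod_mul_distrib]
    exact Finset.prod_congr rfl fun i _ => by rw [← pow_add]; congr 1; simp only [hm]; omega
  apply le_antisymm
  · intro y hy
    obtain ⟨hy1, hy2⟩ := Submodule.mem_inf.mp hy
    rw [Ideal.mem_span_singleton] at hy1 hy2 ⊢
    obtain ⟨r, hr⟩ := hy1
    obtain ⟨s, hs⟩ := hy2
    have key : (∏ i, x i ^ (e i - m i)) * r = (∏ i, x i ^ (t i - m i)) * s := by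
      apply hgreg m
      simp only [smul_eq_mul]
      rw [← mul_assoc, ← hu, ← mul_assoc, ← hv, ← hr, ← hs]
    have hrmem : r ∈ Ideal.span {∏ i, x i ^ (t i - m i)} := by
      apply F5 (fun i => e i - m i) (fun i => t i - m i) (fun i => by simp only [hm]; omega)
      rw [key]
      exact Ideal.mem_span_singleton.mpr ⟨s, rfl⟩
    obtain ⟨c, hc⟩ := Ideal.mem_span_singleton.mp hrmem
    refine ⟨c, ?_⟩
    rw [hr, hc, hl1]
    ring
  · apply le_inf
    · exact Ideal.span_singleton_le_span_singleton.mpr ⟨_, hl1⟩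
    · exact Ideal.span_singleton_le_span_singleton.mpr ⟨_, hl2⟩
end

section
/- Let R be a commutative Noetherian ring and x_1,...,x_d a regular R-sequence contained in the Jacobson radical of R. Let I be a nonzero monomial ideal with generating monomials u_1,...,u_r, and suppose u_1 = vw where v and w are coprime monomials, both ≠ 1. Then I = (vR + u_2R + ... + u_rR) ∩ (wR + u_2R + ... + u_rR). -/
/-!
With `M(S)` the ideal generated by the monomials `x ^ e`, `e ∈ S`, the claim is
`M(insert (a + b) T) = M(insert a T) ⊓ M(insert b T)` for coprime exponents `a`, `b`.
An element of the right-hand side is `α * x ^ a + m` with `m ∈ M(T)` and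
`α * x ^ a ∈ M(insert b T)`.
The colon formula `(M(S) : x ^ a) = M(S - a)` then gives
`α * x ^ a ∈ M((· ⊔ a) '' insert b T) ≤ M(insert (a + b) T)`, since `b ⊔ a = a + b`.
The colon formula reduces to a single variable `x t`, where it follows from `x t` being a
nonzerodivisor modulo every monomial ideal in the other variables. That in turn needs every subfamily
of `x`, in every order, to be regular, which holds for a regular sequence in the Jacobson radical of
a Noetherian ring.
-/

open RingTheory.Sequence Pointwise

lemma forall_notMem_erase_eq_zero {σ : Type*} [DecidableEq σ] {s : Finset σ} {t : σ} {e : σ → ℕ}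
    (hs : ∀ j ∉ s, e j = 0) (ht : e t = 0) : ∀ j ∉ s.erase t, e j = 0 := fun j hj => by
  by_cases hjt : j = t
  · exact hjt ▸ ht
  · exact hs j fun hjs => hj (Finset.mem_erase.mpr ⟨hjt, hjs⟩)

section Monomial

variable {σ R : Type*} [Fintype σ] [CommRing R] (x : σ → R)

def monomial (e : σ → ℕ) : R := ∏ i, x i ^ e i

def monomialIdeal (S : Set (σ → ℕ)) : Ideal R := Ideal.span (monomial x '' S)

@[simp]
lemma monomial_zero : monomial x 0 = 1 := by simp [monomial]

lemma monomial_add (a b : σ → ℕ) : monomial x (a + b) = monomial x a * monomial x b := by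
  simp only [monomial, Pi.add_apply, pow_add, Finset.prod_mul_distrib]

@[simp]
lemma monomial_single [DecidableEq σ] (t : σ) : monomial x (Pi.single t 1) = x t := by
  rw [monomial, Fintype.prod_eq_single t fun i hi => by simp [hi]]
  simp

lemma map_monomial {S : Type*} [CommRing S] (f : R →+* S) (e : σ → ℕ) :
    f (monomial x e) = monomial (f ∘ x) e := by
  simp [monomial, map_prod, map_pow]

lemma monomial_mem_monomialIdeal {S : Set (σ → ℕ)} {e : σ → ℕ} (he : e ∈ S) :
    monomial x e ∈ monomialIdeal x S :=
  Ideal.subset_span ⟨e, he, rfl⟩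

lemma monomialIdeal_le_monomialIdeal {S T : Set (σ → ℕ)} (h : ∀ f ∈ T, ∃ e ∈ S, e ≤ f) :
    monomialIdeal x T ≤ monomialIdeal x S := by
  refine Ideal.span_le.mpr ?_
  rintro _ ⟨f, hf, rfl⟩
  obtain ⟨e, he, hef⟩ := h f hf
  rw [← tsub_add_cancel_of_le hef, monomial_add]
  exact Ideal.mul_mem_left _ _ (monomial_mem_monomialIdeal x he)

lemma map_monomialIdeal {S : Type*} [CommRing S] (f : R →+* S) (T : Set (σ → ℕ)) :
    (monomialIdeal x T).map f = monomialIdeal (f ∘ x) T := by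
  simp only [monomialIdeal, Ideal.map_span, Set.image_image, map_monomial]

lemma monomialIdeal_le_sup_mul [DecidableEq σ] (t : σ) (S : Set (σ → ℕ)) :
    monomialIdeal x S ≤ monomialIdeal x {e ∈ S | e t = 0} ⊔
      Ideal.span {x t} * monomialIdeal x ((· - Pi.single t 1) '' S) := by
  refine Ideal.span_le.mpr ?_
  rintro _ ⟨e, he, rfl⟩
  by_cases het : e t = 0
  · exact Ideal.mem_sup_left (monomial_mem_monomialIdeal x ⟨he, het⟩)
  · have hle : Pi.single t 1 ≤ e := fun i => by
      by_cases hi : i = t <;> simp [hi]; omega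
    refine Ideal.mem_sup_right ?_
    rw [← add_tsub_cancel_of_le hle, monomial_add, monomial_single]
    exact Ideal.mul_mem_mul (Ideal.mem_span_singleton_self _)
      (monomial_mem_monomialIdeal x ⟨e, he, rfl⟩)

lemma monomial_mul_mem_monomialIdeal_sup (a : σ → ℕ) {S : Set (σ → ℕ)} {β : R}
    (hβ : β ∈ monomialIdeal x ((· - a) '' S)) :
    monomial x a * β ∈ monomialIdeal x ((· ⊔ a) '' S) := by
  suffices h : Ideal.span {monomial x a} * monomialIdeal x ((· - a) '' S) ≤
      monomialIdeal x ((· ⊔ a) '' S) from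
    h (Ideal.mul_mem_mul (Ideal.mem_span_singleton_self _) hβ)
  rw [monomialIdeal, Ideal.span_mul_span', Ideal.span_le]
  rintro _ ⟨_, rfl, _, ⟨_, ⟨e, he, rfl⟩, rfl⟩, rfl⟩
  have hmax : e - a + a = e ⊔ a := funext fun i => by
    simp only [Pi.add_apply, Pi.sub_apply, Pi.sup_apply]
    omega
  show monomial x a * monomial x (e - a) ∈ _
  rw [← monomial_add, add_comm, hmax]
  exact monomial_mem_monomialIdeal x ⟨e, he, rfl⟩

lemma monomialIdeal_image_sup_le (a : σ → ℕ) (S : Set (σ → ℕ)) :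
    monomialIdeal x ((· ⊔ a) '' S) ≤ monomialIdeal x S :=
  monomialIdeal_le_monomialIdeal x <| by
    rintro _ ⟨e, he, rfl⟩
    exact ⟨e, he, le_sup_left⟩

lemma mem_monomialIdeal_tsub_single_of_mul_mem [DecidableEq σ] {t : σ} {S : Set (σ → ℕ)}
    (hS₀ : ∀ β, x t * β ∈ monomialIdeal x {e ∈ S | e t = 0} →
      β ∈ monomialIdeal x {e ∈ S | e t = 0})
    {α : R} (hα : x t * α ∈ monomialIdeal x S) :
    α ∈ monomialIdeal x ((· - Pi.single t 1) '' S) := by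
  obtain ⟨m₀, hm₀, _, hy, hsum⟩ := Submodule.mem_sup.mp (monomialIdeal_le_sup_mul x t S hα)
  obtain ⟨m, hm, rfl⟩ := Ideal.mem_span_singleton_mul.mp hy
  have hS₀S : monomialIdeal x {e ∈ S | e t = 0} ≤ monomialIdeal x ((· - Pi.single t 1) '' S) :=
    monomialIdeal_le_monomialIdeal x fun e he => ⟨e - Pi.single t 1, ⟨e, he.1, rfl⟩, tsub_le_self⟩
  have hαm : α - m ∈ monomialIdeal x {e ∈ S | e t = 0} :=
    hS₀ _ (by rwa [mul_sub, ← hsum, add_sub_cancel_right])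
  simpa using add_mem (hS₀S hαm) hm

end Monomial

section Regular

variable {σ R : Type*} [CommRing R]

def IsWeaklyRegularOn (x : σ → R) (s : Finset σ) : Prop :=
  ∀ l : List σ, l.Nodup → (∀ i ∈ l, i ∈ s) → IsWeaklyRegular R (l.map x)

namespace IsWeaklyRegularOn

variable {x : σ → R} {s : Finset σ}

lemma mono {s' : Finset σ} (h : IsWeaklyRegularOn x s) (hs : s' ⊆ s) : IsWeaklyRegularOn x s' :=
  fun l hl hls => h l hl fun i hi => hs (hls i hi)

lemma isSMulRegular (h : IsWeaklyRegularOn x s) {i : σ} (hi : i ∈ s) : IsSMulRegular R (x i) :=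
  (isWeaklyRegular_singleton_iff R (x i)).mp (h [i] (List.nodup_singleton i) (by simpa))

lemma quotient [DecidableEq σ] (h : IsWeaklyRegularOn x s) {t : σ} (ht : t ∈ s) :
    IsWeaklyRegularOn (Ideal.Quotient.mk (Ideal.span {x t}) ∘ x) (s.erase t) := by
  intro l hl hls
  have htl : t ∉ l := fun htl => (Finset.mem_erase.mp (hls t htl)).1 rfl
  have hreg := h (t :: l) (List.nodup_cons.mpr ⟨htl, hl⟩)
    (by simpa [ht] using fun i hi => Finset.mem_of_mem_erase (hls i hi))
  rw [List.map_cons, isWeaklyRegular_cons_iff] at hreg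
  have hspan : (x t • ⊤ : Submodule R R) = Ideal.span {x t} := by
    rw [← Submodule.ideal_span_singleton_smul, smul_eq_mul, Ideal.mul_top]
  have hquot := ((Submodule.quotEquivOfEq _ _ hspan).isWeaklyRegular_congr _).mp hreg.2
  rw [← List.map_map]
  exact (isWeaklyRegular_map_algebraMap_iff (R ⧸ Ideal.span {x t}) _ _).mpr hquot

end IsWeaklyRegularOn

lemma isWeaklyRegularOn_univ_of_isWeaklyRegular [IsNoetherianRing R] {d : ℕ} (x : Fin d → R)
    (hreg : IsWeaklyRegular R (List.ofFn x)) (hjac : ∀ i, x i ∈ (⊥ : Ideal R).jacobson) :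
    IsWeaklyRegularOn x Finset.univ := by
  intro l hl _
  obtain ⟨l', hl', hsub⟩ := hl.subperm fun i _ => List.mem_finRange i
  obtain ⟨rest, hperm⟩ := hsub.exists_perm_append
  have hlr : IsWeaklyRegular R ((l ++ rest).map x) := by
    refine hreg.of_perm_of_subset_jacobson_annihilator ?_ fun r _ => ?_
    · rw [List.ofFn_eq_map]
      exact (hperm.trans (hl'.append_right rest)).map x
    · obtain ⟨i, rfl⟩ := List.mem_ofFn.mp ‹_›
      exact Ideal.jacobson_mono bot_le (hjac i)
  rw [List.map_append] at hlr
  exact ((isWeaklyRegular_append_iff R _ _).mp hlr).1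

end Regular

section Nonzerodivisor

universe u

variable {σ : Type*} [Fintype σ] {R : Type u} [CommRing R] {x : σ → R}

lemma mem_of_mul_mem_monomialIdeal_of_subset_zero {i : σ} (hxi : IsSMulRegular R (x i))
    {S : Set (σ → ℕ)} (hS : S ⊆ {0}) {β : R} (hβ : x i * β ∈ monomialIdeal x S) :
    β ∈ monomialIdeal x S := by
  obtain rfl | rfl := Set.subset_singleton_iff_eq.mp hS
  · have hzero : x i * β = x i * 0 := by simpa [monomialIdeal] using hβ
    rw [hxi hzero]
    exact zero_mem _
  · have h1 : (1 : R) ∈ monomialIdeal x {0} := by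
      simpa using monomial_mem_monomialIdeal x (Set.mem_singleton 0)
    exact (Ideal.eq_top_iff_one _).mpr h1 ▸ Submodule.mem_top

lemma mem_monomialIdeal_sup_span_of_mul_mem [DecidableEq σ] {t i : σ} {S : Set (σ → ℕ)}
    (hquot : ∀ γ : R ⧸ Ideal.span {x t},
      (Ideal.Quotient.mk _ ∘ x) i * γ ∈ monomialIdeal (Ideal.Quotient.mk _ ∘ x) {e ∈ S | e t = 0} →
      γ ∈ monomialIdeal (Ideal.Quotient.mk _ ∘ x) {e ∈ S | e t = 0})
    {β : R} (hβ : x i * β ∈ monomialIdeal x S) :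
    β ∈ monomialIdeal x {e ∈ S | e t = 0} ⊔ Ideal.span {x t} := by
  set π := Ideal.Quotient.mk (Ideal.span {x t})
  have hcomap : monomialIdeal x {e ∈ S | e t = 0} ⊔ Ideal.span {x t} =
      (monomialIdeal (π ∘ x) {e ∈ S | e t = 0}).comap π := by
    rw [← map_monomialIdeal, Ideal.comap_map_of_surjective _ Ideal.Quotient.mk_surjective,
      ← RingHom.ker_eq_comap_bot, Ideal.mk_ker]
  have hle : monomialIdeal x S ≤ monomialIdeal x {e ∈ S | e t = 0} ⊔ Ideal.span {x t} :=
    (monomialIdeal_le_sup_mul x t S).trans (sup_le_sup_left Ideal.mul_le_left _)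
  have hxβ := hle hβ
  rw [hcomap] at hxβ ⊢
  exact hquot (π β) (by simpa using hxβ)

/-- Induction on `s`. Modulo `x t` only the generators with `e t = 0` survive, so the induction
hypothesis over `R ⧸ (x t)` puts `β` in `M({e ∈ S | e t = 0}) + (x t)`; the multiple of `x t` is
then controlled by the colon formula `(M(S) : x t) = M(S - eₜ)` and an inner induction on the
largest exponent of `t` in `S`. -/
theorem mem_of_mul_mem_monomialIdeal [DecidableEq σ] {s : Finset σ} {i : σ} (hi : i ∉ s)
    (hreg : IsWeaklyRegularOn x (insert i s)) {S : Set (σ → ℕ)} (hSfin : S.Finite)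
    (hS : ∀ e ∈ S, ∀ j ∉ s, e j = 0) {β : R} (hβ : x i * β ∈ monomialIdeal x S) :
    β ∈ monomialIdeal x S := by
  induction s using Finset.strongInduction generalizing R i S β with
  | H s ih =>
  obtain rfl | ⟨t, ht⟩ := s.eq_empty_or_nonempty
  · exact mem_of_mul_mem_monomialIdeal_of_subset_zero
      (hreg.isSMulRegular (Finset.mem_insert_self i ∅))
      (fun e he => funext fun j => hS e he j (Finset.notMem_empty j)) hβ
  have hs' : s.erase t ⊂ s := Finset.erase_ssubset ht
  have hi' : i ∉ s.erase t := fun h => hi (Finset.mem_of_mem_erase h)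
  have hreg' : IsWeaklyRegularOn x (insert i (s.erase t)) :=
    hreg.mono (Finset.insert_subset_insert i (Finset.erase_subset t s))
  obtain ⟨k, hk⟩ : ∃ k, ∀ e ∈ S, e t ≤ k :=
    (hSfin.image (· t)).bddAbove.imp fun k hk e he => hk ⟨e, he, rfl⟩
  induction k generalizing S β with
  | zero =>
    exact ih _ hs' hi' hreg' hSfin
      (fun e he => forall_notMem_erase_eq_zero (hS e he) (Nat.le_zero.mp (hk e he))) hβ
  | succ k ihk =>
    have hS₀fin : {e ∈ S | e t = 0}.Finite := hSfin.subset (Set.sep_subset _ _)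
    have hS₀ : ∀ e ∈ {e ∈ S | e t = 0}, ∀ j ∉ s.erase t, e j = 0 := fun e he =>
      forall_notMem_erase_eq_zero (hS e he.1) he.2
    have hquot : IsWeaklyRegularOn (Ideal.Quotient.mk (Ideal.span {x t}) ∘ x)
        (insert i (s.erase t)) := by
      rw [← Finset.erase_insert_of_ne (ne_of_mem_of_not_mem ht hi).symm]
      exact hreg.quotient (Finset.mem_insert_of_mem ht)
    obtain ⟨m₀, hm₀, _, hy, rfl⟩ := Submodule.mem_sup.mp <|
      mem_monomialIdeal_sup_span_of_mul_mem (fun γ => ih _ hs' hi' hquot hS₀fin hS₀) hβ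
    obtain ⟨β₁, rfl⟩ := Ideal.mem_span_singleton'.mp hy
    have hm₀S : m₀ ∈ monomialIdeal x S :=
      monomialIdeal_le_monomialIdeal x (fun e he => ⟨e, he.1, le_rfl⟩) hm₀
    have hβ₁ : x i * β₁ ∈ monomialIdeal x ((· - Pi.single t 1) '' S) := by
      have hreg_t : IsWeaklyRegularOn x (insert t (s.erase t)) := by
        rw [Finset.insert_erase ht]
        exact hreg.mono (Finset.subset_insert i s)
      refine mem_monomialIdeal_tsub_single_of_mul_mem x
        (fun γ => ih _ hs' (Finset.notMem_erase t s) hreg_t hS₀fin hS₀) ?_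
      have := sub_mem hβ (Ideal.mul_mem_left _ (x i) hm₀S)
      rw [mul_add, add_sub_cancel_left] at this
      convert this using 1
      ring
    have hβ₁' := ihk (S := (· - Pi.single t 1) '' S) (hSfin.image _)
      (fun f ⟨e, he, hf⟩ j hj => by simp [← hf, hS e he j hj]) hβ₁
      (fun f ⟨e, he, hf⟩ => by rw [← hf]; simp; have := hk e he; omega)
    refine add_mem hm₀S ?_
    rw [mul_comm, ← monomial_single x t]
    exact monomialIdeal_image_sup_le x _ _ (monomial_mul_mem_monomialIdeal_sup x _ hβ₁')

end Nonzerodivisor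

section Decomposition

variable {σ R : Type*} [Fintype σ] [DecidableEq σ] [CommRing R] {x : σ → R}

theorem mem_monomialIdeal_tsub_of_mul_mem (hreg : IsWeaklyRegularOn x Finset.univ)
    {S : Set (σ → ℕ)} (hS : S.Finite) (a : σ → ℕ) {α : R}
    (hα : α * monomial x a ∈ monomialIdeal x S) : α ∈ monomialIdeal x ((· - a) '' S) := by
  induction hn : ∑ i, a i generalizing a α S with
  | zero =>
    obtain rfl : a = 0 := funext fun i => Finset.sum_eq_zero_iff.mp hn i (Finset.mem_univ i)
    simpa using hα
  | succ n ih =>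
    obtain ⟨t, ht⟩ : ∃ t, a t ≠ 0 := by
      by_contra! h
      simp [h] at hn
    have hle : Pi.single t 1 ≤ a := fun i => by
      by_cases hi : i = t <;> simp [hi]; omega
    have hsplit : Pi.single t 1 + (a - Pi.single t 1) = a := add_tsub_cancel_of_le hle
    have hn' : ∑ i, (a - Pi.single t 1 : σ → ℕ) i = n := by
      rw [← hsplit] at hn
      simp only [Pi.add_apply, Finset.sum_add_distrib, Finset.sum_pi_single', Finset.mem_univ,
        if_true] at hn
      omega
    have hxt : ∀ β, x t * β ∈ monomialIdeal x {e ∈ S | e t = 0} →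
        β ∈ monomialIdeal x {e ∈ S | e t = 0} :=
      fun β => mem_of_mul_mem_monomialIdeal (Finset.notMem_erase t _)
        (by rwa [Finset.insert_erase (Finset.mem_univ t)]) (hS.subset (Set.sep_subset _ _))
        fun e he j hj => by simp [show j = t by simpa using hj, he.2]
    have hcolon := mem_monomialIdeal_tsub_single_of_mul_mem x hxt
      (α := α * monomial x (a - Pi.single t 1))
      (by rwa [← hsplit, monomial_add, monomial_single, mul_left_comm] at hα)
    have := ih (hS.image _) _ hcolon hn'
    rwa [Set.image_image, funext fun e : σ → ℕ => tsub_tsub e _ _, hsplit] at this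

theorem monomialIdeal_insert_add_eq_inf (hreg : IsWeaklyRegularOn x Finset.univ)
    {T : Set (σ → ℕ)} (hT : T.Finite) {a b : σ → ℕ} (hab : ∀ i, min (a i) (b i) = 0) :
    monomialIdeal x (insert (a + b) T) =
      monomialIdeal x (insert a T) ⊓ monomialIdeal x (insert b T) := by
  have hT_le : ∀ c, monomialIdeal x T ≤ monomialIdeal x (insert c T) := fun c =>
    Ideal.span_mono (Set.image_mono (Set.subset_insert c T))
  have hle : ∀ c, c ≤ a + b → monomialIdeal x (insert (a + b) T) ≤ monomialIdeal x (insert c T) :=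
    fun c hc => monomialIdeal_le_monomialIdeal x <| by
      rintro f (rfl | hf)
      exacts [⟨c, Set.mem_insert c T, hc⟩, ⟨f, Set.mem_insert_of_mem c hf, le_rfl⟩]
  refine le_antisymm (le_inf (hle a le_self_add) (hle b le_add_self)) fun f hf => ?_
  obtain ⟨hfa, hfb⟩ := Submodule.mem_inf.mp hf
  rw [monomialIdeal, Set.image_insert_eq, Ideal.span_insert] at hfa
  obtain ⟨_, hva, m, hm, rfl⟩ := Submodule.mem_sup.mp hfa
  obtain ⟨α, rfl⟩ := Ideal.mem_span_singleton'.mp hva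
  have hαa : α * monomial x a ∈ monomialIdeal x (insert b T) := by
    simpa using sub_mem hfb (hT_le b hm)
  have hcolon := monomial_mul_mem_monomialIdeal_sup x a
    (mem_monomialIdeal_tsub_of_mul_mem hreg (hT.insert b) a hαa)
  refine add_mem ?_ (hT_le _ hm)
  rw [mul_comm]
  refine monomialIdeal_le_monomialIdeal x ?_ hcolon
  rintro _ ⟨e, he | he, rfl⟩
  · exact ⟨a + b, Set.mem_insert _ _, fun i => by simp [he]; have := hab i; omega⟩
  · exact ⟨e, Set.mem_insert_of_mem _ he, le_sup_left⟩

end Decomposition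

theorem stmt_2_general {R : Type*} [CommRing R] [IsNoetherianRing R] {d : ℕ} (x : Fin d → R)
    (hreg : RingTheory.Sequence.IsRegular R (List.ofFn x))
    (hjac : ∀ i, x i ∈ Ideal.jacobson (⊥ : Ideal R))
    {r : ℕ} (E : Fin (r + 1) → Fin d → ℕ) (u : Fin (r + 1) → R)
    (hu : ∀ j, u j = ∏ i, x i ^ E j i)
    (I : Ideal R) (hI : I = Ideal.span (Set.range u))
    (a b : Fin d → ℕ) (v w : R) (hv : v = ∏ i, x i ^ a i) (hw : w = ∏ i, x i ^ b i)
    (hvw : u 0 = v * w) (hcop : ∀ i, min (a i) (b i) = 0) :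
    I = (Ideal.span ({v} ∪ u '' {j | j ≠ 0})) ⊓ (Ideal.span ({w} ∪ u '' {j | j ≠ 0})) := by
  obtain rfl : u = fun j => monomial x (E j) := funext hu
  obtain rfl : v = monomial x a := hv
  obtain rfl : w = monomial x b := hw
  have hgens : ∀ c, {monomial x c} ∪ (fun j => monomial x (E j)) '' {j | j ≠ 0} =
      monomial x '' insert c (E '' {j | j ≠ 0}) := fun c => by
    rw [Set.image_insert_eq, Set.image_image, Set.insert_eq]
  have hrange : Set.range (fun j => monomial x (E j)) =
      monomial x '' insert (a + b) (E '' {j | j ≠ 0}) := by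
    rw [← hgens, monomial_add, ← hvw, ← Set.image_singleton (f := fun j => monomial x (E j)),
      ← Set.image_union, ← Set.image_univ]
    congr
    ext j
    simpa using eq_or_ne j 0
  rw [hI, hgens, hgens, hrange]
  exact monomialIdeal_insert_add_eq_inf
    (isWeaklyRegularOn_univ_of_isWeaklyRegular x hreg.toIsWeaklyRegular hjac) (Set.toFinite _) hcop

theorem stmt_2 {R : Type*} [CommRing R] [IsNoetherianRing R] {d : ℕ} (x : Fin d → R)
    (hreg : RingTheory.Sequence.IsRegular R (List.ofFn x))
    (hjac : ∀ i, x i ∈ Ideal.jacobson (⊥ : Ideal R))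
    {r : ℕ} (E : Fin (r + 1) → Fin d → ℕ) (u : Fin (r + 1) → R)
    (hu : ∀ j, u j = ∏ i, x i ^ E j i)
    (I : Ideal R) (hI : I = Ideal.span (Set.range u)) (hIproper : I ≠ ⊤) (hI0 : I ≠ ⊥)
    (a b : Fin d → ℕ) (v w : R) (hv : v = ∏ i, x i ^ a i) (hw : w = ∏ i, x i ^ b i)
    (hvw : u 0 = v * w) (hcop : ∀ i, min (a i) (b i) = 0) (hv1 : v ≠ 1) (hw1 : w ≠ 1) :
    I = (Ideal.span ({v} ∪ u '' {j | j ≠ 0})) ⊓ (Ideal.span ({w} ∪ u '' {j | j ≠ 0})) :=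
  stmt_2_general x hreg hjac E u hu I hI a b v w hv hw hvw hcop
end

section
/- Let R be a commutative Noetherian ring and let p be a prime ideal generated by a regular R-sequence x_1,...,x_s contained in the Jacobson radical of R. Then for every n ≥ 1, p^n is a p-primary ideal; in particular the n-th symbolic power p^{(n)} equals p^n. -/
/-!
A weakly regular sequence `x₁, …, xₛ` is quasi-regular: a form of degree `n` in the `xᵢ` lying in
`(x) ^ (n + 1)` has all its coefficients in `(x)`. This goes by induction on `s`: writing
`(x) = I + (y)` with `y = xₛ` regular modulo `I`, quasi-regularity of `I` makes `y` regular modulo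
every power of `I`, and a form in `x` splits as a form in the first `s - 1` elements plus `y` times
a form of one degree less, to which induction on the degree applies.

Quasi-regularity in turn makes every element that is regular modulo `(x)` regular modulo every
power of `(x)`. For `p = (x)` prime this applies to all `a ∉ p`, which is exactly the statement
that `p ^ n` is `p`-primary and equals its symbolic power.
-/

open Finset Finset.Nat Ideal

section Multidegree

variable {s n : ℕ}

lemma snoc_init_of_last_eq_zero {ν : Fin (s + 1) → ℕ} (h : ν (Fin.last s) = 0) :
    Fin.snoc (Fin.init ν) 0 = ν := by
  rw [← h, Fin.snoc_init_self]

lemma sub_add_single_of_last_ne_zero {ν : Fin (s + 1) → ℕ} (h : ν (Fin.last s) ≠ 0) :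
    ν - Pi.single (Fin.last s) 1 + Pi.single (Fin.last s) 1 = ν := by
  funext i
  obtain rfl | hi := eq_or_ne i (Fin.last s)
  · simp only [Pi.add_apply, Pi.sub_apply, Pi.single_eq_same]
    omega
  · simp [hi]

namespace Finset.Nat

lemma snoc_zero_mem_antidiagonalTuple {μ : Fin s → ℕ} :
    (Fin.snoc μ 0 : Fin (s + 1) → ℕ) ∈ antidiagonalTuple (s + 1) n ↔
      μ ∈ antidiagonalTuple s n := by
  simp [mem_antidiagonalTuple, Fin.sum_univ_castSucc]

lemma add_single_mem_antidiagonalTuple {μ : Fin s → ℕ} (i : Fin s) :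
    μ + Pi.single i 1 ∈ antidiagonalTuple s (n + 1) ↔ μ ∈ antidiagonalTuple s n := by
  simp [mem_antidiagonalTuple, sum_add_distrib]

lemma sum_antidiagonalTuple_succ_succ {M : Type*} [AddCommMonoid M]
    (f : (Fin (s + 1) → ℕ) → M) :
    ∑ ν ∈ antidiagonalTuple (s + 1) (n + 1), f ν =
      ∑ μ ∈ antidiagonalTuple s (n + 1), f (Fin.snoc μ 0) +
        ∑ μ ∈ antidiagonalTuple (s + 1) n, f (μ + Pi.single (Fin.last s) 1) := by
  rw [← sum_filter_add_sum_filter_not _ (fun ν => ν (Fin.last s) = 0)]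
  congr 1
  · refine sum_nbij' Fin.init (Fin.snoc · 0) ?_ ?_ ?_ (fun μ _ => Fin.init_snoc _ _) ?_ <;>
      simp only [mem_filter, and_imp]
    · intro ν hν h
      rwa [← snoc_zero_mem_antidiagonalTuple, snoc_init_of_last_eq_zero h]
    · exact fun μ hμ => ⟨snoc_zero_mem_antidiagonalTuple.mpr hμ, Fin.snoc_last _ _⟩
    · exact fun ν _ h => snoc_init_of_last_eq_zero h
    · exact fun ν _ h => by rw [snoc_init_of_last_eq_zero h]
  · refine sum_nbij' (· - Pi.single (Fin.last s) 1) (· + Pi.single (Fin.last s) 1)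
      ?_ ?_ ?_ (fun μ _ => add_tsub_cancel_right _ _) ?_ <;> simp only [mem_filter, and_imp]
    · intro ν hν h
      rwa [← add_single_mem_antidiagonalTuple, sub_add_single_of_last_ne_zero h]
    · exact fun μ hμ => ⟨(add_single_mem_antidiagonalTuple _).mpr hμ, by simp⟩
    · exact fun ν _ h => sub_add_single_of_last_ne_zero h
    · exact fun ν _ h => by rw [sub_add_single_of_last_ne_zero h]

end Finset.Nat

end Multidegree

section IdealPowers

variable {R : Type*} [CommRing R]

lemma Ideal.sup_pow_succ_le (A B : Ideal R) (m : ℕ) :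
    (A ⊔ B) ^ (m + 1) ≤ A ^ (m + 1) ⊔ B * (A ⊔ B) ^ m := by
  induction m with
  | zero => simp
  | succ m ih =>
    calc (A ⊔ B) ^ (m + 2) = A * (A ⊔ B) ^ (m + 1) ⊔ B * (A ⊔ B) ^ (m + 1) := by
          rw [pow_succ' _ (m + 1), sup_mul]
      _ ≤ A * (A ^ (m + 1) ⊔ B * (A ⊔ B) ^ m) ⊔ B * (A ⊔ B) ^ (m + 1) := by gcongr
      _ = A ^ (m + 2) ⊔ (B * (A * (A ⊔ B) ^ m) ⊔ B * (A ⊔ B) ^ (m + 1)) := by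
          rw [mul_sup, sup_assoc, pow_succ' A (m + 1), mul_left_comm]
      _ ≤ A ^ (m + 2) ⊔ B * (A ⊔ B) ^ (m + 1) := by
          gcongr
          refine sup_le ?_ le_rfl
          rw [pow_succ' _ m]
          gcongr
          exact le_sup_left

lemma exists_mem_pow_of_add_mul_mem_sup_pow {A : Ideal R} {y : R} {m : ℕ}
    (hy : IsSMulRegular (R ⧸ A ^ m) y) {g h : R} (hg : g ∈ A ^ m)
    (hgh : g + y * h ∈ (A ⊔ span {y}) ^ (m + 1)) :
    ∃ h' ∈ A ^ m, h - h' ∈ (A ⊔ span {y}) ^ m ∧ g + y * h' ∈ A ^ (m + 1) := by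
  obtain ⟨a, ha, b, hb, hab⟩ := Submodule.mem_sup.mp (sup_pow_succ_le A (span {y}) m hgh)
  obtain ⟨h₁, hh₁, rfl⟩ := mem_span_singleton_mul.mp hb
  have hyh : y • (h - h₁) ∈ A ^ m := by
    rw [smul_eq_mul, show y * (h - h₁) = a - g by linear_combination -hab]
    exact sub_mem (pow_le_pow_right (Nat.le_succ m) ha) hg
  refine ⟨h - h₁, mem_of_isSMulRegular_quotient_of_smul_mem hy hyh, by simpa using hh₁, ?_⟩
  rwa [show g + y * (h - h₁) = a by linear_combination -hab]

end IdealPowers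

namespace RingTheory.Sequence

variable {R : Type*} [CommRing R] {s : ℕ}

def prodPow (x : Fin s → R) (ν : Fin s → ℕ) : R := ∏ i, x i ^ ν i

lemma prodPow_zero (x : Fin s → R) : prodPow x 0 = 1 := by simp [prodPow]

lemma prodPow_add_single (x : Fin s → R) (ν : Fin s → ℕ) (i : Fin s) :
    prodPow x (ν + Pi.single i 1) = prodPow x ν * x i := by
  simp only [prodPow, Pi.add_apply, pow_add, prod_mul_distrib]
  congr 1
  simp [Pi.single_apply]

lemma prodPow_snoc_snoc_zero (x : Fin s → R) (y : R) (μ : Fin s → ℕ) :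
    prodPow (Fin.snoc x y) (Fin.snoc μ 0) = prodPow x μ := by
  simp [prodPow, Fin.prod_univ_castSucc]

lemma prodPow_mem_pow (x : Fin s → R) {n : ℕ} {ν : Fin s → ℕ}
    (hν : ν ∈ antidiagonalTuple s n) : prodPow x ν ∈ span (Set.range x) ^ n := by
  rw [← mem_antidiagonalTuple.mp hν, ← prod_pow_eq_pow_sum]
  exact Ideal.prod_mem_prod fun i _ => Ideal.pow_mem_pow (subset_span (Set.mem_range_self i)) _

lemma pow_span_range_le (x : Fin s → R) (n : ℕ) :
    span (Set.range x) ^ n ≤ span (prodPow x '' antidiagonalTuple s n) := by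
  induction n with
  | zero =>
    rw [pow_zero, one_eq_top, top_le_iff, eq_top_iff_one, ← prodPow_zero x]
    exact subset_span ⟨0, by simp [mem_antidiagonalTuple], rfl⟩
  | succ n ih =>
    rw [pow_succ]
    refine (mul_mono_left ih).trans ?_
    rw [span_mul_span']
    refine span_mono ?_
    rintro _ ⟨_, ⟨ν, hν, rfl⟩, _, ⟨i, rfl⟩, rfl⟩
    exact ⟨ν + Pi.single i 1, (add_single_mem_antidiagonalTuple i).mpr hν,
      prodPow_add_single x ν i⟩

lemma exists_sum_eq_of_mem_pow (x : Fin s → R) {n : ℕ} {b : R}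
    (hb : b ∈ span (Set.range x) ^ n) :
    ∃ c : (Fin s → ℕ) → R, ∑ ν ∈ antidiagonalTuple s n, c ν * prodPow x ν = b := by
  obtain ⟨l, hl, rfl⟩ := (Finsupp.mem_span_image_iff_linearCombination R).mp
    (pow_span_range_le x n hb)
  refine ⟨l, ?_⟩
  rw [Finsupp.linearCombination_apply, Finsupp.sum, sum_subset hl]
  · rfl
  · intro ν _ hν
    rw [Finsupp.notMem_support_iff.mp hν, zero_smul]

lemma sum_mul_prodPow_mem (x : Fin s → R) {n : ℕ} {J : Ideal R} {c : (Fin s → ℕ) → R}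
    (hc : ∀ ν ∈ antidiagonalTuple s n, c ν ∈ J) :
    ∑ ν ∈ antidiagonalTuple s n, c ν * prodPow x ν ∈ J * span (Set.range x) ^ n :=
  sum_mem fun ν hν => mul_mem_mul (hc ν hν) (prodPow_mem_pow x hν)

lemma sum_mul_prodPow_snoc (x : Fin s → R) (y : R) (n : ℕ) (c : (Fin (s + 1) → ℕ) → R) :
    ∑ ν ∈ antidiagonalTuple (s + 1) (n + 1), c ν * prodPow (Fin.snoc x y) ν =
      ∑ μ ∈ antidiagonalTuple s (n + 1), c (Fin.snoc μ 0) * prodPow x μ +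
        y * ∑ μ ∈ antidiagonalTuple (s + 1) n,
          c (μ + Pi.single (Fin.last s) 1) * prodPow (Fin.snoc x y) μ := by
  simp only [sum_antidiagonalTuple_succ_succ, prodPow_snoc_snoc_zero, prodPow_add_single,
    Fin.snoc_last, mul_sum]
  congr 1
  exact sum_congr rfl fun _ _ => by ring

/-- Quasi-regularity in the sense of Matsumura, *Commutative Ring Theory*, §16: the forms over
`R ⧸ (x)` map injectively to the associated graded ring of `(x)`. -/
def IsQuasiRegular (x : Fin s → R) : Prop :=
  ∀ n (c : (Fin s → ℕ) → R),
    ∑ ν ∈ antidiagonalTuple s n, c ν * prodPow x ν ∈ span (Set.range x) ^ (n + 1) →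
      ∀ ν ∈ antidiagonalTuple s n, c ν ∈ span (Set.range x)

lemma IsQuasiRegular.isSMulRegular_quotient_pow {x : Fin s → R} (hx : IsQuasiRegular x)
    {a : R} (ha : IsSMulRegular (R ⧸ span (Set.range x)) a) (k : ℕ) :
    IsSMulRegular (R ⧸ span (Set.range x) ^ k) a := by
  rw [isSMulRegular_quotient_iff_mem_of_smul_mem] at ha ⊢
  induction k with
  | zero => simp
  | succ k ih =>
    intro b hb
    obtain ⟨c, rfl⟩ := exists_sum_eq_of_mem_pow x (ih b (pow_le_pow_right k.le_succ hb))
    rw [smul_eq_mul, mul_sum] at hb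
    simp_rw [← mul_assoc] at hb
    rw [pow_succ']
    exact sum_mul_prodPow_mem x fun ν hν => ha _ (hx k (fun ν => a * c ν) hb ν hν)

lemma isQuasiRegular_elim0 (x : Fin 0 → R) : IsQuasiRegular x := by
  rintro (_ | n) c hc
  · simpa [antidiagonalTuple_zero_right, prodPow] using hc
  · simp [antidiagonalTuple_zero_succ]

lemma IsQuasiRegular.snoc {x : Fin s → R} (hx : IsQuasiRegular x) {y : R}
    (hy : IsSMulRegular (R ⧸ span (Set.range x)) y) : IsQuasiRegular (Fin.snoc x y) := by
  have hI : span (Set.range (Fin.snoc x y)) = span (Set.range x) ⊔ span {y} := by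
    rw [Fin.range_snoc, span_insert, sup_comm]
  intro n
  induction n with
  | zero =>
    intro c hc
    simpa [antidiagonalTuple_zero_right, prodPow] using hc
  | succ n ih =>
    intro c hc
    rw [sum_mul_prodPow_snoc, hI] at hc
    obtain ⟨h', hh', hH, hG⟩ := exists_mem_pow_of_add_mul_mem_sup_pow
      (hx.isSMulRegular_quotient_pow hy (n + 1))
      (sum_mem fun μ hμ => mul_mem_left _ _ (prodPow_mem_pow x hμ)) hc
    obtain ⟨k, rfl⟩ := exists_sum_eq_of_mem_pow x hh'
    have hlast : ∀ μ ∈ antidiagonalTuple (s + 1) n,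
        c (μ + Pi.single (Fin.last s) 1) ∈ span (Set.range (Fin.snoc x y)) := by
      refine ih _ ?_
      rw [hI]
      simpa using add_mem hH (pow_right_mono le_sup_left _ hh')
    have hinit : ∀ μ ∈ antidiagonalTuple s (n + 1),
        c (Fin.snoc μ 0) + y * k μ ∈ span (Set.range x) := by
      refine hx _ _ ?_
      convert hG using 1
      simp only [mul_sum, ← sum_add_distrib]
      exact sum_congr rfl fun _ _ => by ring
    intro ν hν
    obtain h | h := eq_or_ne (ν (Fin.last s)) 0
    · rw [← snoc_init_of_last_eq_zero h] at hν ⊢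
      rw [hI, ← add_sub_cancel_right (c _) (y * k _)]
      exact sub_mem (mem_sup_left (hinit _ (snoc_zero_mem_antidiagonalTuple.mp hν)))
        (mem_sup_right (mul_mem_right _ _ (mem_span_singleton_self y)))
    · rw [← sub_add_single_of_last_ne_zero h] at hν ⊢
      exact hlast _ ((add_single_mem_antidiagonalTuple _).mp hν)

lemma ofList_ofFn_smul_top (x : Fin s → R) :
    (ofList (List.ofFn x) • ⊤ : Submodule R R) = span (Set.range x) := by
  rw [smul_eq_mul, mul_top, ofList]
  congr 1
  ext
  simp [List.mem_ofFn]

theorem IsWeaklyRegular.isQuasiRegular :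
    ∀ {s : ℕ} {x : Fin s → R}, IsWeaklyRegular R (List.ofFn x) → IsQuasiRegular x
  | 0, x, _ => isQuasiRegular_elim0 x
  | s + 1, x, h => by
    rw [List.ofFn_succ', List.concat_eq_append, isWeaklyRegular_append_iff,
      isWeaklyRegular_singleton_iff, ofList_ofFn_smul_top] at h
    rw [← Fin.snoc_init_self x]
    exact h.1.isQuasiRegular.snoc h.2

end RingTheory.Sequence

section Primary

variable {R : Type*} [CommRing R] {p q : Ideal R}

lemma Ideal.IsPrime.isSMulRegular_quotient (hp : p.IsPrime) {a : R} (ha : a ∉ p) :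
    IsSMulRegular (R ⧸ p) a :=
  (isSMulRegular_quotient_iff_mem_of_smul_mem _ _).mpr fun _ hb =>
    (hp.mem_or_mem hb).resolve_left ha

lemma Ideal.isPrimary_of_isSMulRegular (hp : p.IsPrime) (hq : q.radical = p)
    (h : ∀ a ∉ p, IsSMulRegular (R ⧸ q) a) : q.IsPrimary := by
  refine isPrimary_iff.mpr ⟨fun hq_top => hp.ne_top (by rw [← hq, hq_top, radical_top]), ?_⟩
  intro a b hab
  by_cases hb : b ∈ p
  · exact Or.inr (hq ▸ hb)
  · exact Or.inl (mem_of_isSMulRegular_quotient_of_smul_mem (h b hb)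
      (by rwa [smul_eq_mul, mul_comm]))

lemma Ideal.setOf_exists_notMem_mul_mem_eq (hp : p ≠ ⊤)
    (h : ∀ a ∉ p, IsSMulRegular (R ⧸ q) a) : {y : R | ∃ t ∉ p, t * y ∈ q} = q := by
  ext y
  refine ⟨fun ⟨t, ht, hty⟩ => mem_of_isSMulRegular_quotient_of_smul_mem (h t ht) hty,
    fun hy => ⟨1, fun h1 => hp ((eq_top_iff_one p).mpr h1), by rwa [one_mul]⟩⟩

end Primary

theorem stmt_6_general {R : Type*} [CommRing R] {s : ℕ} (x : Fin s → R)
    (hreg : RingTheory.Sequence.IsRegular R (List.ofFn x))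
    (p : Ideal R) (hp : p = Ideal.span (Set.range x)) (hprime : p.IsPrime) :
    ∀ n : ℕ, 1 ≤ n → (p ^ n).IsPrimary ∧ (p ^ n).radical = p ∧
      {y : R | ∃ t ∉ p, t * y ∈ p ^ n} = ((p ^ n : Ideal R) : Set R) := by
  intro n hn
  have hregular : ∀ a ∉ p, IsSMulRegular (R ⧸ p ^ n) a := by
    subst hp
    exact fun a ha => hreg.toIsWeaklyRegular.isQuasiRegular.isSMulRegular_quotient_pow
      (hprime.isSMulRegular_quotient ha) n
  have hrad : (p ^ n).radical = p := by rw [radical_pow _ (by omega), hprime.radical]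
  exact ⟨isPrimary_of_isSMulRegular hprime hrad hregular, hrad,
    setOf_exists_notMem_mul_mem_eq hprime.ne_top hregular⟩

theorem stmt_6 {R : Type*} [CommRing R] [IsNoetherianRing R] {s : ℕ} (x : Fin s → R)
    (hreg : RingTheory.Sequence.IsRegular R (List.ofFn x))
    (hjac : ∀ i, x i ∈ Ideal.jacobson (⊥ : Ideal R))
    (p : Ideal R) (hp : p = Ideal.span (Set.range x)) (hprime : p.IsPrime) :
    ∀ n : ℕ, 1 ≤ n → (p ^ n).IsPrimary ∧ (p ^ n).radical = p ∧
      {y : R | ∃ t ∉ p, t * y ∈ p ^ n} = ((p ^ n : Ideal R) : Set R) :=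
  stmt_6_general x hreg p hp hprime
end

section
/- Let R be a commutative Noetherian ring, x_1,...,x_d a regular R-sequence in the Jacobson radical of R, with (x_1,...,x_d)R prime. If p is a prime ideal of R that is also a monomial ideal with respect to x_1,...,x_d, then p is generated by a subset of {x_1,...,x_d}. -/
theorem stmt_7 {R : Type*} [CommRing R] [IsNoetherianRing R] {d : ℕ} (x : Fin d → R)
    (hreg : RingTheory.Sequence.IsRegular R (List.ofFn x))
    (hjac : ∀ i, x i ∈ Ideal.jacobson (⊥ : Ideal R))
    (hprime : (Ideal.span (Set.range x)).IsPrime)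
    (p : Ideal R) (hp : p.IsPrime)
    (hmono : ∃ E : Set (Fin d → ℕ), p = Ideal.span ((fun e => ∏ i, x i ^ e i) '' E)) :
    ∃ S : Set (Fin d), p = Ideal.span (x '' S) := by
  obtain ⟨E, hE⟩ := hmono
  refine ⟨{i | x i ∈ p}, le_antisymm ?_ ?_⟩
  · -- p ≤ span (x '' S)
    rw [hE, Ideal.span_le]
    rintro _ ⟨e, heE, rfl⟩
    -- the monomial ∏ x i ^ e i ∈ p
    have hm : (∏ i, x i ^ e i) ∈ p := by
      rw [hE]
      exact Ideal.subset_span ⟨e, heE, rfl⟩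
    have := (Ideal.IsPrime.prod_mem_iff (hp := hp)).mp hm
    obtain ⟨i, -, hi⟩ := this
    have hei : e i ≠ 0 := by
      rintro h
      rw [h, pow_zero] at hi
      exact hp.ne_top (Ideal.eq_top_of_isUnit_mem _ hi isUnit_one)
    have hxi : x i ∈ p := hp.mem_of_pow_mem _ hi
    have hdvd : x i ∣ ∏ j, x j ^ e j :=
      dvd_trans (dvd_pow_self _ hei) (Finset.dvd_prod_of_mem _ (Finset.mem_univ i))
    obtain ⟨c, hc⟩ := hdvd
    dsimp only
    rw [hc, mul_comm]
    exact Ideal.mul_mem_left _ _ (Ideal.subset_span ⟨i, by rwa [Set.mem_setOf_eq, ← hE], rfl⟩)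
  · rw [Ideal.span_le]
    rintro _ ⟨i, hi, rfl⟩
    exact hi
end

section
/- Let R be a commutative Noetherian ring, x_1,...,x_d a regular R-sequence in the Jacobson radical of R, with p = (x_{i_1},...,x_{i_s})R prime for some subset of indices. Then for every k ≥ 1 and every monomial m = x_1^{e_1}···x_d^{e_d}, m ∈ p^k if and only if e_{i_1} + ... + e_{i_s} ≥ k. -/
/-!
If every subsequence of `t, y₁, …, yₙ`, in every order, is weakly regular on `M`, then `t` is a
nonzerodivisor on `M / JᵐM` for `J = (y₁, …, yₙ)` and every `m`. Induct on `n` and write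
`J = (y₁) + J'`. Applied to `t` and `J'` on `M / y₁M`, the induction hypothesis puts any `w` with
`t • w ∈ JᵐM` into `J'ᵐM + y₁M`; the remaining multiple of `y₁` is handled by the colon identity
`(J^{m+1}M : y₁) = JᵐM`, which follows from `J^{m+1} ⊆ y₁Jᵐ + J'^{m+1}` and the induction
hypothesis applied to `y₁` and `J'` on `M`.

Over a Noetherian ring a regular sequence in the Jacobson radical is regular in every order, so a
monomial lying in `pᵏ` can be stripped of its factors `xᵢ ∉ p`, while each factor `xᵢ ∈ p`
lowers the exponent by one; if `k` exceeded the `p`-degree we would end with `1 ∈ p`.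
-/

open RingTheory.Sequence Pointwise

namespace Ideal

variable {R : Type*} [CommRing R]

lemma sup_pow_succ_le_s16 (I K : Ideal R) (m : ℕ) :
    (I ⊔ K) ^ (m + 1) ≤ I * (I ⊔ K) ^ m ⊔ K ^ (m + 1) := by
  induction m with
  | zero => simp
  | succ m ih =>
    have hK : K * (I * (I ⊔ K) ^ m) ≤ I * (I ⊔ K) ^ (m + 1) := by
      rw [mul_left_comm, pow_succ' (I ⊔ K)]
      exact mul_mono_right (mul_mono_left le_sup_right)
    calc (I ⊔ K) ^ (m + 2) = I * (I ⊔ K) ^ (m + 1) ⊔ K * (I ⊔ K) ^ (m + 1) := by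
          rw [pow_succ' _ (m + 1), sup_mul]
      _ ≤ I * (I ⊔ K) ^ (m + 1) ⊔ (K * (I * (I ⊔ K) ^ m) ⊔ K ^ (m + 2)) := by
          rw [pow_succ' K, ← mul_sup]
          exact sup_le_sup_left (mul_mono_right ih) _
      _ ≤ I * (I ⊔ K) ^ (m + 1) ⊔ K ^ (m + 2) := by
          rw [← sup_assoc, sup_eq_left.mpr hK]

lemma ofList_ofFn {n : ℕ} (f : Fin n → R) : ofList (List.ofFn f) = span (Set.range f) :=
  congrArg span (Set.ext fun r => List.mem_ofFn' f r)

end Ideal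

lemma List.map_subperm_ofFn_of_nodup {α : Type*} {d : ℕ} (x : Fin d → α) {l : List (Fin d)}
    (hl : l.Nodup) : (l.map x).Subperm (List.ofFn x) := by
  obtain ⟨l', hperm, hsub⟩ := List.subperm_of_subset hl fun i _ => List.mem_finRange i
  rw [List.ofFn_eq_map]
  exact ⟨l'.map x, hperm.map x, hsub.map x⟩

namespace Submodule

variable {R M : Type*} [CommRing R] [AddCommGroup M] [Module R M]

lemma mk_mem_smul_top_iff (N : Submodule R M) (I : Ideal R) (w : M) :
    (Quotient.mk w : M ⧸ N) ∈ I • (⊤ : Submodule R (M ⧸ N)) ↔ w ∈ I • ⊤ ⊔ N := by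
  rw [← N.range_mkQ, ← map_top, ← map_smul'', sup_comm, ← comap_map_mkQ]
  rfl

lemma span_singleton_sup_pow_succ_smul_top_le (y : R) (K : Ideal R) (m : ℕ) :
    (Ideal.span {y} ⊔ K) ^ (m + 1) • (⊤ : Submodule R M) ≤
      y • ((Ideal.span {y} ⊔ K) ^ m • ⊤) ⊔ K ^ (m + 1) • ⊤ := by
  calc _ ≤ (Ideal.span {y} * (Ideal.span {y} ⊔ K) ^ m ⊔ K ^ (m + 1)) • (⊤ : Submodule R M) :=
        smul_mono_left (Ideal.sup_pow_succ_le_s16 _ _ _)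
    _ = _ := by rw [sup_smul, mul_smul, ideal_span_singleton_smul]

theorem mem_span_singleton_sup_pow_smul_top_of_smul_mem {y : R} {K : Ideal R} {m : ℕ}
    (hy : IsSMulRegular (M ⧸ K ^ (m + 1) • (⊤ : Submodule R M)) y) {z : M}
    (hz : y • z ∈ (Ideal.span {y} ⊔ K) ^ (m + 1) • (⊤ : Submodule R M)) :
    z ∈ (Ideal.span {y} ⊔ K) ^ m • (⊤ : Submodule R M) := by
  obtain ⟨_, hya, b, hb, hab⟩ := mem_sup.mp (span_singleton_sup_pow_succ_smul_top_le y K m hz)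
  obtain ⟨a, ha, rfl⟩ := (mem_smul_pointwise_iff_exists _ _ _).mp hya
  have hza : z - a ∈ K ^ (m + 1) • (⊤ : Submodule R M) :=
    mem_of_isSMulRegular_quotient_of_smul_mem hy (by rwa [smul_sub, ← hab, add_sub_cancel_left])
  have hKJ : K ^ (m + 1) ≤ (Ideal.span {y} ⊔ K) ^ m :=
    (Ideal.pow_le_pow_right m.le_succ).trans (Ideal.pow_right_mono le_sup_right m)
  simpa using add_mem (smul_mono_left hKJ hza) ha

end Submodule

namespace RingTheory.Sequence

open Submodule

variable {R M : Type*} [CommRing R] [AddCommGroup M] [Module R M]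

lemma mem_pow_smul_top_sup_of_smul_mem {y t : R} {K : Ideal R} {m : ℕ}
    (ht : IsSMulRegular (QuotSMulTop y M ⧸ K ^ (m + 1) • (⊤ : Submodule R (QuotSMulTop y M))) t)
    {w : M} (hw : t • w ∈ (Ideal.span {y} ⊔ K) ^ (m + 1) • (⊤ : Submodule R M)) :
    w ∈ K ^ (m + 1) • ⊤ ⊔ y • (⊤ : Submodule R M) := by
  rw [← mk_mem_smul_top_iff]
  refine mem_of_isSMulRegular_quotient_of_smul_mem ht ?_
  rw [← Quotient.mk_smul, mk_mem_smul_top_iff]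
  have hle : y • ((Ideal.span {y} ⊔ K) ^ m • ⊤) ⊔ K ^ (m + 1) • ⊤ ≤
      K ^ (m + 1) • ⊤ ⊔ y • (⊤ : Submodule R M) := by
    rw [sup_comm]
    exact sup_le_sup_left (smul_mono_right _ le_top) _
  exact hle (span_singleton_sup_pow_succ_smul_top_le y K m hw)

theorem isSMulRegular_quotient_ofList_pow_smul_top {t : R} {ys : List R}
    (h : ∀ l : List R, l.Subperm (t :: ys) → IsWeaklyRegular M l) (m : ℕ) :
    IsSMulRegular (M ⧸ Ideal.ofList ys ^ m • (⊤ : Submodule R M)) t := by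
  induction ys generalizing M t m with
  | nil =>
    rw [isSMulRegular_quotient_iff_mem_of_smul_mem]
    cases m with
    | zero => simp
    | succ m =>
      have ht := (isWeaklyRegular_singleton_iff M t).mp (h _ (List.Subperm.refl _))
      simpa using fun w hw => ht (hw.trans (smul_zero t).symm)
  | cons y ys ih =>
    induction m with
    | zero => simp [isSMulRegular_quotient_iff_mem_of_smul_mem]
    | succ m ihm =>
      rw [isSMulRegular_quotient_iff_mem_of_smul_mem] at ihm ⊢
      simp only [Ideal.ofList_cons] at ihm ⊢
      intro w hw
      have hy : IsSMulRegular (M ⧸ Ideal.ofList ys ^ (m + 1) • (⊤ : Submodule R M)) y :=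
        ih (fun l hl => h l (hl.trans (List.sublist_cons_self t _).subperm)) _
      have hquot := ih (M := QuotSMulTop y M) (t := t) (fun l hl =>
        ((isWeaklyRegular_cons_iff M y l).mp
          (h _ (((List.subperm_cons y).mpr hl).trans (List.Perm.swap t y ys).subperm))).2) (m + 1)
      obtain ⟨b, hb, _, hc, rfl⟩ := mem_sup.mp (mem_pow_smul_top_sup_of_smul_mem hquot hw)
      obtain ⟨c, -, rfl⟩ := (mem_smul_pointwise_iff_exists _ _ _).mp hc
      have hKJ : Ideal.ofList ys ^ (m + 1) • ⊤ ≤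
          (Ideal.span {y} ⊔ Ideal.ofList ys) ^ (m + 1) • (⊤ : Submodule R M) :=
        smul_mono_left (Ideal.pow_right_mono le_sup_right _)
      have hyc : y • (t • c) ∈
          (Ideal.span {y} ⊔ Ideal.ofList ys) ^ (m + 1) • (⊤ : Submodule R M) := by
        rw [smul_comm, ← add_sub_cancel_left b (y • c), smul_sub]
        exact sub_mem hw (hKJ (smul_mem _ t hb))
      have hc : c ∈ (Ideal.span {y} ⊔ Ideal.ofList ys) ^ m • (⊤ : Submodule R M) :=
        ihm c (mem_span_singleton_sup_pow_smul_top_of_smul_mem hy hyc)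
      refine add_mem (hKJ hb) ?_
      rw [pow_succ', mul_smul]
      exact smul_mem_smul (mem_sup_left (Ideal.mem_span_singleton_self y)) hc

lemma IsWeaklyRegular.of_subperm_of_subset_jacobson_annihilator [IsNoetherian R M]
    {rs l : List R} (h : IsWeaklyRegular M rs) (hl : l.Subperm rs)
    (hj : ∀ r ∈ rs, r ∈ (Module.annihilator R M).jacobson) : IsWeaklyRegular M l := by
  obtain ⟨l', hperm, hsub⟩ := hl
  obtain ⟨rest, hrest⟩ := hsub.exists_perm_append
  have hl' := ((isWeaklyRegular_append_iff M l' rest).mp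
    (h.of_perm_of_subset_jacobson_annihilator hrest hj)).1
  exact hl'.of_perm_of_subset_jacobson_annihilator hperm fun r hr => hj r (hsub.subset hr)

theorem mem_ofList_pow_smul_top_of_smul_mem {y : R} {ys : List R} (hy : y ∈ ys)
    (h : ∀ l : List R, l.Subperm ys → IsWeaklyRegular M l) {m : ℕ} {z : M}
    (hz : y • z ∈ Ideal.ofList ys ^ m • (⊤ : Submodule R M)) :
    z ∈ Ideal.ofList ys ^ (m - 1) • (⊤ : Submodule R M) := by
  classical
  have hperm := List.perm_cons_erase hy
  have hJ : Ideal.ofList ys = Ideal.span {y} ⊔ Ideal.ofList (ys.erase y) := by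
    rw [← Ideal.ofList_cons]
    exact congrArg Ideal.span (Set.ext fun _ => hperm.mem_iff)
  cases m with
  | zero => simp
  | succ m =>
    rw [hJ] at hz ⊢
    exact mem_span_singleton_sup_pow_smul_top_of_smul_mem
      (isSMulRegular_quotient_ofList_pow_smul_top
        (fun l hl => h l (hl.trans hperm.symm.subperm)) _) hz

lemma mem_pow_sub_smul_top_of_pow_smul_mem {J : Ideal R} {y : R}
    (hy : ∀ m (z : M), y • z ∈ J ^ m • (⊤ : Submodule R M) → z ∈ J ^ (m - 1) • (⊤ : Submodule R M))
    (n : ℕ) {m : ℕ} {z : M} (hz : y ^ n • z ∈ J ^ m • (⊤ : Submodule R M)) :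
    z ∈ J ^ (m - n) • (⊤ : Submodule R M) := by
  induction n generalizing z with
  | zero => simpa using hz
  | succ n ih =>
    rw [pow_succ, mul_smul] at hz
    simpa [Nat.sub_sub] using hy _ _ (ih hz)

theorem mem_pow_sub_smul_top_of_prod_pow_smul_mem {ν : Type*} [DecidableEq ν] {x : ν → R}
    {J : Ideal R} {T : Finset ν}
    (hin : ∀ i ∈ T, ∀ m (z : M),
      x i • z ∈ J ^ m • (⊤ : Submodule R M) → z ∈ J ^ (m - 1) • (⊤ : Submodule R M))
    (hout : ∀ i ∉ T, ∀ m, IsSMulRegular (M ⧸ J ^ m • (⊤ : Submodule R M)) (x i))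
    (e : ν → ℕ) (S : Finset ν) {k : ℕ} {z : M}
    (hz : (∏ i ∈ S, x i ^ e i) • z ∈ J ^ k • (⊤ : Submodule R M)) :
    z ∈ J ^ (k - ∑ i ∈ S ∩ T, e i) • (⊤ : Submodule R M) := by
  induction S using Finset.induction_on generalizing k with
  | empty => simpa using hz
  | insert a S ha ih =>
    rw [Finset.prod_insert ha, mul_smul] at hz
    by_cases haT : a ∈ T
    · rw [Finset.insert_inter_of_mem haT,
        Finset.sum_insert fun h => ha (Finset.mem_inter.mp h).1, ← Nat.sub_sub]
      exact ih (mem_pow_sub_smul_top_of_pow_smul_mem (hin a haT) _ hz)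
    · rw [Finset.insert_inter_of_notMem haT]
      exact ih (mem_of_isSMulRegular_quotient_of_smul_mem ((hout a haT k).pow _) hz)

section Family

variable {d s : ℕ} {x : Fin d → R} {ι : Fin s → Fin d}

theorem mem_span_range_pow_smul_top_of_smul_mem
    (hx : ∀ l : List R, l.Subperm (List.ofFn x) → IsWeaklyRegular M l) (hι : ι.Injective)
    (j : Fin s) {m : ℕ} {z : M}
    (hz : x (ι j) • z ∈ Ideal.span (Set.range fun j => x (ι j)) ^ m • (⊤ : Submodule R M)) :
    z ∈ Ideal.span (Set.range fun j => x (ι j)) ^ (m - 1) • (⊤ : Submodule R M) := by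
  rw [← Ideal.ofList_ofFn] at hz ⊢
  have hsub := List.map_subperm_ofFn_of_nodup x (List.nodup_ofFn.mpr hι)
  rw [List.map_ofFn] at hsub
  exact mem_ofList_pow_smul_top_of_smul_mem ((List.mem_ofFn' _ _).mpr ⟨j, rfl⟩)
    (fun l hl => hx l (hl.trans hsub)) hz

theorem isSMulRegular_quotient_span_range_pow_smul_top
    (hx : ∀ l : List R, l.Subperm (List.ofFn x) → IsWeaklyRegular M l) (hι : ι.Injective)
    {i : Fin d} (hi : i ∉ Set.range ι) (m : ℕ) :
    IsSMulRegular (M ⧸ Ideal.span (Set.range fun j => x (ι j)) ^ m • (⊤ : Submodule R M))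
      (x i) := by
  rw [← Ideal.ofList_ofFn]
  have hnodup : (i :: List.ofFn ι).Nodup :=
    List.nodup_cons.mpr ⟨fun h => hi ((List.mem_ofFn' ι i).mp h), List.nodup_ofFn.mpr hι⟩
  have hsub := List.map_subperm_ofFn_of_nodup x hnodup
  rw [List.map_cons, List.map_ofFn] at hsub
  exact isSMulRegular_quotient_ofList_pow_smul_top (fun l hl => hx l (hl.trans hsub)) m

theorem mem_span_range_pow_sub_smul_top_of_prod_pow_smul_mem
    (hx : ∀ l : List R, l.Subperm (List.ofFn x) → IsWeaklyRegular M l) (hι : ι.Injective)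
    (e : Fin d → ℕ) {k : ℕ} {z : M}
    (hz : (∏ i, x i ^ e i) • z ∈
      Ideal.span (Set.range fun j => x (ι j)) ^ k • (⊤ : Submodule R M)) :
    z ∈ Ideal.span (Set.range fun j => x (ι j)) ^ (k - ∑ j, e (ι j)) • (⊤ : Submodule R M) := by
  classical
  have hT (i : Fin d) : i ∈ Finset.univ.image ι ↔ i ∈ Set.range ι := by simp
  rw [← Finset.sum_image hι.injOn, ← Finset.univ_inter (Finset.univ.image ι)]
  refine mem_pow_sub_smul_top_of_prod_pow_smul_mem ?_
    (fun i hi => isSMulRegular_quotient_span_range_pow_smul_top hx hι ((hT i).not.mp hi)) e _ hz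
  intro i hi m z hz
  obtain ⟨j, rfl⟩ := (hT i).mp hi
  exact mem_span_range_pow_smul_top_of_smul_mem hx hι j hz

end Family

end RingTheory.Sequence

lemma prod_pow_mem_span_range_pow {R : Type*} [CommRing R] {d s : ℕ} (x : Fin d → R)
    {ι : Fin s → Fin d} (hι : ι.Injective) (e : Fin d → ℕ) :
    (∏ i, x i ^ e i) ∈ Ideal.span (Set.range fun j => x (ι j)) ^ ∑ j, e (ι j) := by
  classical
  rw [← Finset.prod_mul_prod_compl (Finset.univ.image ι), ← Finset.sum_image hι.injOn,
    ← Finset.prod_pow_eq_pow_sum]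
  refine Ideal.mul_mem_right _ _ (Ideal.prod_mem_prod fun i hi => Ideal.pow_mem_pow ?_ _)
  obtain ⟨j, -, rfl⟩ := Finset.mem_image.mp hi
  exact Ideal.subset_span ⟨j, rfl⟩

theorem stmt_16_general {R : Type*} [CommRing R] [IsNoetherianRing R] {d : ℕ} (x : Fin d → R)
    (hreg : RingTheory.Sequence.IsRegular R (List.ofFn x))
    (hjac : ∀ i, x i ∈ Ideal.jacobson (⊥ : Ideal R))
    {s : ℕ} (ι : Fin s → Fin d) (hι : Function.Injective ι)
    (p : Ideal R) (hp : p = Ideal.span (Set.range fun j => x (ι j)))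
    (k : ℕ) (e : Fin d → ℕ) :
    (∏ i, x i ^ e i) ∈ p ^ k ↔ k ≤ ∑ j, e (ι j) := by
  subst hp
  have hx (l : List R) (hl : l.Subperm (List.ofFn x)) : IsWeaklyRegular R l :=
    hreg.toIsWeaklyRegular.of_subperm_of_subset_jacobson_annihilator hl fun r hr => by
      obtain ⟨i, rfl⟩ := (List.mem_ofFn' x r).mp hr
      exact Ideal.jacobson_mono bot_le (hjac i)
  refine ⟨fun hm => ?_, fun hk => Ideal.pow_le_pow_right hk (prod_pow_mem_span_range_pow x hι e)⟩
  by_contra! hlt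
  have hone := mem_span_range_pow_sub_smul_top_of_prod_pow_smul_mem hx hι e (z := (1 : R))
    (by simpa using hm)
  replace hone : (1 : R) ∈ Ideal.span (Set.range fun j => x (ι j)) :=
    Ideal.pow_le_self (Nat.sub_ne_zero_of_lt hlt) (by simpa using hone)
  have hle : Ideal.span (Set.range fun j => x (ι j)) ≤ Ideal.ofList (List.ofFn x) :=
    Ideal.ofList_ofFn x ▸ Ideal.span_mono (Set.range_comp_subset_range ι x)
  exact hreg.top_ne_smul (by rw [(Ideal.eq_top_iff_one _).mpr (hle hone), Submodule.top_smul])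

theorem stmt_16 {R : Type*} [CommRing R] [IsNoetherianRing R] {d : ℕ} (x : Fin d → R)
    (hreg : RingTheory.Sequence.IsRegular R (List.ofFn x))
    (hjac : ∀ i, x i ∈ Ideal.jacobson (⊥ : Ideal R))
    {s : ℕ} (ι : Fin s → Fin d) (hι : Function.Injective ι)
    (p : Ideal R) (hp : p = Ideal.span (Set.range fun j => x (ι j))) (hprime : p.IsPrime)
    (k : ℕ) (hk : 1 ≤ k) (e : Fin d → ℕ) :
    (∏ i, x i ^ e i) ∈ p ^ k ↔ k ≤ ∑ j, e (ι j) :=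
  stmt_16_general x hreg hjac ι hι p hp k e
end
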